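/- arXiv:2604.08386 — 4 statements merged into one kernel-verified Lean document; each statement's English description precedes it below -/
import Mathlib

section
/- Let G=(V,E) and 𝒢=(𝒱,ℰ) be finite simple undirected graphs and let φ: V → 𝒱 be a surjective weak homomorphism such that for every y∈𝒱, every x∈φ⁻¹(y), and every y'∼y, the harmonic measure satisfies ℋ_y(x,y') = 1/deg(y). Then for every y∈𝒱, every x∈φ⁻¹(y) having at least one G-neighbor outside φ⁻¹(y), and every y'∼y, the multiplicity satisfies deg(y)·k_{y'}(x) = deg_G(x) − k_y(x), where k_y(x) is the number of G-neighbors of x inside φ⁻¹(y); in particular k_{y'}(x) is the same for all y'∼y, and φ is horizontally conformal. -/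
open Finset Classical

variable {V W : Type*}

/-- Degree of a vertex in a finite simple graph (classical count of neighbors). -/
noncomputable def gdeg [Fintype V] (G : SimpleGraph V) (v : V) : ℕ :=
  (Finset.univ.filter (fun z => G.Adj v z)).card

/-- A function `f` is harmonic at the vertex `v`: the degree is positive and
`f v` equals the average of `f` over the neighbors of `v`. -/
def HarmonicAt [Fintype V] (G : SimpleGraph V) (f : V → ℝ) (v : V) : Prop :=
  0 < gdeg G v ∧
    f v = (∑ z ∈ Finset.univ.filter (fun z => G.Adj v z), f z) / (gdeg G v : ℝ)

/-- `φ` is a harmonic morphism: the pullback of any function harmonic at a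
macro-node `y` is harmonic at every node of the macro-set `φ⁻¹(y)`. -/
def HarmonicMorphism [Fintype V] [Fintype W] (G : SimpleGraph V) (H : SimpleGraph W)
    (φ : V → W) : Prop :=
  ∀ y : W, ∀ x : V, φ x = y → ∀ f : W → ℝ, HarmonicAt H f y → HarmonicAt G (f ∘ φ) x

/-- `φ` is a weak homomorphism: adjacent nodes map to adjacent or identical macro-nodes. -/
def WeakHom (G : SimpleGraph V) (H : SimpleGraph W) (φ : V → W) : Prop :=
  ∀ x z : V, G.Adj x z → H.Adj (φ x) (φ z) ∨ φ x = φ z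

/-- Multiplicity `k_{y'}(x)`: the number of neighbors of `x` lying in the macro-set `φ⁻¹(y')`. -/
noncomputable def mult [Fintype V] (G : SimpleGraph V) (φ : V → W) (y' : W) (x : V) : ℕ :=
  (Finset.univ.filter (fun z => φ z = y' ∧ G.Adj x z)).card

/-- Extended multiplicity `k̃_{y'}(x)`: the number of `z ∈ φ⁻¹(y')` with `z ∼ x` or `z = x`. -/
noncomputable def emult [Fintype V] (G : SimpleGraph V) (φ : V → W) (y' : W) (x : V) : ℕ :=
  (Finset.univ.filter (fun z => φ z = y' ∧ (G.Adj x z ∨ z = x))).card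

/-- `φ` is horizontally conformal: a weak homomorphism whose multiplicities
`k_{y'}(x)` take the same value over all macro-nodes `y'` adjacent to `y = φ x`. -/
def HorizontallyConformal [Fintype V] (G : SimpleGraph V) (H : SimpleGraph W)
    (φ : V → W) : Prop :=
  WeakHom G H φ ∧
    ∀ y : W, ∀ x : V, φ x = y → ∀ y₁ y₂ : W, H.Adj y y₁ → H.Adj y y₂ →
      mult G φ y₁ x = mult G φ y₂ x

/-- `φ` is combinatorial conformal: a weak homomorphism whose extended multiplicities
`k̃_{y'}(x)` take the same value over all `y'` with `y' ∼ y` or `y' = y`, where `y = φ x`. -/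
def CombinatorialConformal [Fintype V] (G : SimpleGraph V) (H : SimpleGraph W)
    (φ : V → W) : Prop :=
  WeakHom G H φ ∧
    ∀ y : W, ∀ x : V, φ x = y → ∀ y₁ y₂ : W,
      (H.Adj y y₁ ∨ y₁ = y) → (H.Adj y y₂ ∨ y₂ = y) →
      emult G φ y₁ x = emult G φ y₂ x

/-- The boundary `∂G_y`: vertices outside the macro-set `φ⁻¹(y)` adjacent to it. -/
def boundarySet (G : SimpleGraph V) (φ : V → W) (y : W) : Set V :=
  {z | φ z ≠ y ∧ ∃ x : V, φ x = y ∧ G.Adj x z}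

/-- `h` solves the first-exit (Dirichlet) problem characterizing the harmonic
measure `ℋ_y(·, y')`: it is harmonic (average of neighbors) at every vertex of
the macro-set `φ⁻¹(y)`, equals `1` on `∂G_{yy'}` and `0` on `∂G_y ∖ ∂G_{yy'}`. -/
def IsExitSolution [Fintype V] (G : SimpleGraph V) (φ : V → W) (y y' : W)
    (h : V → ℝ) : Prop :=
  (∀ x : V, φ x = y →
      (gdeg G x : ℝ) * h x = ∑ z ∈ Finset.univ.filter (fun z => G.Adj x z), h z) ∧
  (∀ z : V, z ∈ boundarySet G φ y → φ z = y' → h z = 1) ∧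
  (∀ z : V, z ∈ boundarySet G φ y → φ z ≠ y' → h z = 0)

/-- The quotient graph of a coarse-graining `φ`: two distinct macro-nodes are
adjacent iff some edge of `G` joins their pre-images. -/
def quotientGraph (G : SimpleGraph V) (φ : V → W) : SimpleGraph W where
  Adj y y' := y ≠ y' ∧ ∃ x z : V, φ x = y ∧ φ z = y' ∧ G.Adj x z
  symm := ⟨fun _ _ ⟨h1, x, z, hx, hz, hadj⟩ => ⟨h1.symm, z, x, hz, hx, hadj.symm⟩⟩
  loopless := ⟨fun _ ⟨h1, _⟩ => h1 rfl⟩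

/-!
Fix `y` and `y' ∼ y` and let `h` solve the exit problem for `φ⁻¹(y)` with boundary values the
indicator of `φ⁻¹(y')` (it exists by the Dirichlet principle). By hypothesis `h ≡ 1 / deg y` on
`φ⁻¹(y)`, so harmonicity of `h` at `x ∈ φ⁻¹(y)` reads `deg x / deg y = k_y(x) / deg y + k_{y'}(x)`.
-/

open Matrix
open scoped BigOperators

theorem Matrix.IsSymm.dotProduct_mulVec_add_single {n R : Type*} [Fintype n] [DecidableEq n]
    [CommRing R] {A : Matrix n n R} (hA : A.IsSymm) (v : n → R) (i : n) (s : R) :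
    (v + Pi.single i s) ⬝ᵥ A *ᵥ (v + Pi.single i s)
      = v ⬝ᵥ A *ᵥ v + 2 * s * (A *ᵥ v) i + s ^ 2 * A i i := by
  have hcross : v ⬝ᵥ A *ᵥ Pi.single i s = s * (A *ᵥ v) i := by
    rw [dotProduct_mulVec, ← mulVec_transpose, hA.eq, dotProduct_single, mul_comm]
  have hdiag : (A *ᵥ Pi.single i s) i = A i i * s := by
    simp [mulVec, dotProduct_single]
  rw [mulVec_add, dotProduct_add, add_dotProduct, add_dotProduct, single_dotProduct,
    single_dotProduct, hcross, hdiag]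
  ring

theorem Function.update_eq_add_single_sub {ι R : Type*} [DecidableEq ι] [AddCommGroup R]
    (f : ι → R) (i : ι) (a : R) : Function.update f i a = f + Pi.single i (a - f i) := by
  ext j
  rcases eq_or_ne j i with rfl | hji
  · simp
  · simp [hji]

namespace SimpleGraph

variable [Fintype V] [DecidableEq V] (G : SimpleGraph V) [DecidableRel G.Adj]

theorem lapMatrix_apply_self (x : V) : G.lapMatrix ℝ x x = G.degree x := by
  simp [lapMatrix, degMatrix]

theorem dotProduct_lapMatrix_mulVec_update_expect (h : V → ℝ) {x : V} (hx : 0 < G.degree x) :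
    Function.update h x (𝔼 u ∈ G.neighborFinset x, h u) ⬝ᵥ
        G.lapMatrix ℝ *ᵥ Function.update h x (𝔼 u ∈ G.neighborFinset x, h u)
      = h ⬝ᵥ G.lapMatrix ℝ *ᵥ h - (G.lapMatrix ℝ *ᵥ h) x ^ 2 / G.degree x := by
  simp only [Function.update_eq_add_single_sub,
    (G.isSymm_lapMatrix (R := ℝ)).dotProduct_mulVec_add_single, lapMatrix_apply_self,
    lapMatrix_mulVec_apply, expect_eq_sum_div_card, card_neighborFinset_eq_degree]
  field_simp
  ring

/-- Minimise the energy `hᵀ L h` over the functions equal to `g` off `S` and bounded by `M` on `S`: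
replacing `h x` by the average of its neighbours stays in this box and lowers the energy by
`(L h)ₓ² / deg x`, so a minimiser is harmonic on `S`. -/
theorem exists_lapMatrix_mulVec_eq_zero_on (S : Set V) (g : V → ℝ) :
    ∃ h : V → ℝ, (∀ z ∉ S, h z = g z) ∧ ∀ x ∈ S, (G.lapMatrix ℝ *ᵥ h) x = 0 := by
  set M := ∑ z, |g z|
  have hg : ∀ z, g z ∈ Set.Icc (-M) M := fun z =>
    abs_le.mp (single_le_sum (fun z _ => abs_nonneg (g z)) (mem_univ z))
  set K : Set (V → ℝ) := Set.univ.pi fun z => if z ∈ S then Set.Icc (-M) M else {g z}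
  have hK : IsCompact K := isCompact_univ_pi fun z => by
    split_ifs
    exacts [isCompact_Icc, isCompact_singleton]
  have hgK : g ∈ K := fun z _ => by by_cases hz : z ∈ S <;> simp [hz, hg z]
  have hQ : Continuous fun h : V → ℝ => h ⬝ᵥ G.lapMatrix ℝ *ᵥ h :=
    continuous_id.dotProduct (continuous_const.matrix_mulVec continuous_id)
  obtain ⟨h, hhK, hmin⟩ := hK.exists_isMinOn ⟨g, hgK⟩ hQ.continuousOn
  have hbox : ∀ z, h z ∈ Set.Icc (-M) M := fun z => by
    have := hhK z (Set.mem_univ z)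
    dsimp only at this
    split_ifs at this
    exacts [this, (Set.mem_singleton_iff.mp this) ▸ hg z]
  refine ⟨h, fun z hz => by simpa [hz] using hhK z (Set.mem_univ z), fun x hx => ?_⟩
  rcases (G.degree x).eq_zero_or_pos with hdeg | hdeg
  · rw [← card_neighborFinset_eq_degree, card_eq_zero] at hdeg
    simp [lapMatrix_mulVec_apply, ← card_neighborFinset_eq_degree, hdeg]
  have hne : (G.neighborFinset x).Nonempty := by rwa [← card_pos, card_neighborFinset_eq_degree]
  have hmem : Function.update h x (𝔼 u ∈ G.neighborFinset x, h u) ∈ K :=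
    (Set.update_mem_pi_iff_of_mem hhK).mpr fun _ => by
      rw [if_pos hx]
      exact ⟨le_expect hne fun u _ => (hbox u).1, expect_le hne fun u _ => (hbox u).2⟩
  have hle : h ⬝ᵥ G.lapMatrix ℝ *ᵥ h
      ≤ h ⬝ᵥ G.lapMatrix ℝ *ᵥ h - (G.lapMatrix ℝ *ᵥ h) x ^ 2 / G.degree x :=
    G.dotProduct_lapMatrix_mulVec_update_expect h hdeg ▸ hmin hmem
  have hdrop : (G.lapMatrix ℝ *ᵥ h) x ^ 2 / G.degree x = 0 :=
    le_antisymm (by linarith) (by positivity)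
  simpa [hdeg.ne'] using hdrop

end SimpleGraph

section ExitProblem

variable [Fintype V]

theorem gdeg_eq_degree (G : SimpleGraph V) (x : V) : gdeg G x = G.degree x := by
  rw [gdeg, ← SimpleGraph.card_neighborFinset_eq_degree, SimpleGraph.neighborFinset_eq_filter]

theorem exists_isExitSolution (G : SimpleGraph V) (φ : V → W) (y y' : W) :
    ∃ h : V → ℝ, IsExitSolution G φ y y' h := by
  obtain ⟨h, hout, hharm⟩ := G.exists_lapMatrix_mulVec_eq_zero_on {v | φ v = y}
    fun v => if φ v = y' then 1 else 0
  refine ⟨h, fun x hx => ?_, fun z hz hzy' => by simp [hout z hz.1, hzy'],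
    fun z hz hzy' => by simp [hout z hz.1, hzy']⟩
  have := hharm x hx
  rwa [SimpleGraph.lapMatrix_mulVec_apply, sub_eq_zero, SimpleGraph.neighborFinset_eq_filter,
    ← gdeg_eq_degree] at this

theorem IsExitSolution.sum_adj {G : SimpleGraph V} {φ : V → W} {y y' : W} {h : V → ℝ} {c : ℝ}
    {x : V}
    (hh : IsExitSolution G φ y y' h) (hyy' : y ≠ y') (hc : ∀ v, φ v = y → h v = c)
    (hx : φ x = y) :
    ∑ z ∈ univ.filter (fun z => G.Adj x z), h z = mult G φ y x * c + mult G φ y' x := by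
  have hval : ∀ z ∈ univ.filter (fun z => G.Adj x z),
      h z = (if φ z = y then c else 0) + (if φ z = y' then 1 else 0) := by
    intro z hz
    by_cases hzy : φ z = y
    · simp [hc z hzy, hzy, hyy']
    have hzb : z ∈ boundarySet G φ y := ⟨hzy, x, hx, (mem_filter.mp hz).2⟩
    by_cases hzy' : φ z = y'
    · simp [hh.2.1 z hzb hzy', hzy', hyy'.symm]
    · simp [hh.2.2 z hzb hzy', hzy, hzy']
  rw [sum_congr rfl hval, sum_add_distrib, ← sum_filter, ← sum_filter, sum_const, sum_const,
    filter_filter, filter_filter]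
  simp [mult, and_comm]

theorem gdeg_eq_mult_add_mul_mult_of_exitSolution_eq {G : SimpleGraph V} {φ : V → W} {y y' : W}
    {x : V} {d : ℕ}
    (hx : φ x = y) (hyy' : y ≠ y') (hd : 0 < d)
    (hH : ∀ h, IsExitSolution G φ y y' h → ∀ v, φ v = y → h v = 1 / d) :
    gdeg G x = mult G φ y x + d * mult G φ y' x := by
  obtain ⟨h, hh⟩ := exists_isExitSolution G φ y y'
  have hharm := hh.1 x hx
  rw [hh.sum_adj hyy' (hH h hh) hx, hH h hh x hx] at hharm
  have : (gdeg G x : ℝ) = mult G φ y x + d * mult G φ y' x := by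
    field_simp at hharm
    linarith
  exact_mod_cast this

theorem mult_eq_zero_of_forall_adj {G : SimpleGraph V} {φ : V → W} {x : V} {y' : W}
    (hx : ∀ z, G.Adj x z → φ z = φ x) (hy' : y' ≠ φ x) : mult G φ y' x = 0 := by
  rw [mult, card_eq_zero, filter_eq_empty_iff]
  rintro z - ⟨rfl, hadj⟩
  exact hy' (hx z hadj)

end ExitProblem

theorem harmonic_measure_horizontally_conformal_general
    [Fintype V] [Fintype W] (G : SimpleGraph V) (H : SimpleGraph W)
    (φ : V → W)
    (hdeg : ∀ y : W, (boundarySet G φ y).Nonempty → 1 ≤ gdeg H y)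
    (hweak : WeakHom G H φ)
    (hHM : ∀ y : W, ∀ x : V, φ x = y → ∀ y' : W, H.Adj y y' →
      ∀ h : V → ℝ, IsExitSolution G φ y y' h → h x = 1 / (gdeg H y : ℝ)) :
    (∀ y : W, ∀ x : V, φ x = y → (∃ z : V, G.Adj x z ∧ φ z ≠ y) →
      ∀ y' : W, H.Adj y y' →
        gdeg H y * mult G φ y' x = gdeg G x - mult G φ y x) ∧
      HorizontallyConformal G H φ := by
  have key : ∀ y x, φ x = y → (∃ z, G.Adj x z ∧ φ z ≠ y) → ∀ y', H.Adj y y' →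
      1 ≤ gdeg H y ∧ gdeg G x = mult G φ y x + gdeg H y * mult G φ y' x := by
    rintro y x hx ⟨z, hxz, hzy⟩ y' hyy'
    have hd := hdeg y ⟨z, hzy, x, hx, hxz⟩
    exact ⟨hd, gdeg_eq_mult_add_mul_mult_of_exitSolution_eq hx hyy'.ne hd
      fun h hh v hv => hHM y v hv y' hyy' h hh⟩
  refine ⟨fun y x hx hout y' hyy' => by obtain ⟨-, e⟩ := key y x hx hout y' hyy'; omega,
    hweak, ?_⟩
  intro y x hx y₁ y₂ h₁ h₂
  by_cases hout : ∃ z, G.Adj x z ∧ φ z ≠ y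
  · obtain ⟨hd, e₁⟩ := key y x hx hout y₁ h₁
    obtain ⟨-, e₂⟩ := key y x hx hout y₂ h₂
    exact Nat.eq_of_mul_eq_mul_left hd (by omega)
  · push Not at hout
    subst hx
    rw [mult_eq_zero_of_forall_adj hout h₁.ne', mult_eq_zero_of_forall_adj hout h₂.ne']

/-- If `φ` is a surjective weak homomorphism satisfying the harmonic measure condition
`ℋ_y(x, y') = 1 / deg_𝒢 y`, then for every `y`, every `x ∈ φ⁻¹(y)` with at least one
neighbor outside `φ⁻¹(y)`, and every `y' ∼ y`, `deg_𝒢(y) · k_{y'}(x) = deg_G(x) − k_y(x)`;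
in particular the multiplicities are constant and `φ` is horizontally conformal. -/
theorem harmonic_measure_horizontally_conformal
    [Fintype V] [Fintype W] (G : SimpleGraph V) (H : SimpleGraph W)
    (φ : V → W) (hsurj : Function.Surjective φ)
    (hdeg : ∀ y : W, (boundarySet G φ y).Nonempty → 1 ≤ gdeg H y)
    (hweak : WeakHom G H φ)
    (hHM : ∀ y : W, ∀ x : V, φ x = y → ∀ y' : W, H.Adj y y' →
      ∀ h : V → ℝ, IsExitSolution G φ y y' h → h x = 1 / (gdeg H y : ℝ)) :
    (∀ y : W, ∀ x : V, φ x = y → (∃ z : V, G.Adj x z ∧ φ z ≠ y) →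
      ∀ y' : W, H.Adj y y' →
        gdeg H y * mult G φ y' x = gdeg G x - mult G φ y x) ∧
      HorizontallyConformal G H φ :=
  harmonic_measure_horizontally_conformal_general G H φ hdeg hweak hHM
end

section
/- Let G=(V,E) and 𝒢=(𝒱,ℰ) be finite simple undirected graphs and let φ: V → 𝒱 be a surjective map. Then φ is combinatorial conformal if and only if for every y∈𝒱, every x∈φ⁻¹(y), and every y'∈𝒱 with y'∼y or y'=y, the one-step transition probability of the lazy random walk on G satisfies ℙ(ℒ₁ ∈ φ⁻¹(y') | ℒ₀ = x) = 1/(deg(y)+1); equivalently, the extended multiplicity satisfies k̃_{y'}(x)/(deg_G(x)+1) = 1/(deg_𝒢(y)+1). -/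
open Finset Classical

variable {V W : Type*}

/-! Summing `k̃_{y'}(x)` over the closed neighbourhood `N[y]` of `y = φ x` counts the vertices of
`N[x]` that `φ` maps into `N[y]`: at most `deg x + 1`, with equality for all `x` exactly when `φ`
is a weak homomorphism. The lazy-walk condition `k̃_{y'}(x) (deg y + 1) = deg x + 1` on `N[y]`
says at once that the `k̃_{y'}(x)` are constant on `N[y]` and that their sum is `deg x + 1`. -/

theorem forall_mul_card_eq_iff {ι : Type*} {s : Finset ι} (hs : s.Nonempty) (f : ι → ℕ) (m : ℕ) :
    (∀ i ∈ s, f i * #s = m) ↔ ∑ i ∈ s, f i = m ∧ ∀ i ∈ s, ∀ j ∈ s, f i = f j := by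
  constructor
  · intro h
    have hconst : ∀ i ∈ s, ∀ j ∈ s, f i = f j := fun i hi j hj =>
      Nat.eq_of_mul_eq_mul_right hs.card_pos ((h i hi).trans (h j hj).symm)
    obtain ⟨i₀, hi₀⟩ := hs
    rw [sum_const_nat fun i hi => hconst i hi i₀ hi₀, mul_comm]
    exact ⟨h i₀ hi₀, hconst⟩
  · rintro ⟨hsum, hconst⟩ i hi
    rw [← hsum, sum_const_nat fun j hj => hconst j hj i hi, mul_comm]

theorem natCast_div_succ_eq_one_div_succ_iff (k a b : ℕ) :
    (k : ℝ) / (a + 1) = 1 / (b + 1) ↔ k * (b + 1) = a + 1 := by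
  rw [div_eq_div_iff (by positivity) (by positivity), one_mul]
  exact_mod_cast Iff.rfl

section ClosedNeighborhood

variable [Fintype V]

noncomputable def closedNeighborFinset (G : SimpleGraph V) (v : V) : Finset V :=
  {z | G.Adj v z ∨ z = v}

theorem mem_closedNeighborFinset {G : SimpleGraph V} {v z : V} :
    z ∈ closedNeighborFinset G v ↔ G.Adj v z ∨ z = v := by
  simp [closedNeighborFinset]

theorem card_closedNeighborFinset (G : SimpleGraph V) (v : V) :
    #(closedNeighborFinset G v) = gdeg G v + 1 := by
  have : closedNeighborFinset G v = insert v ({z | G.Adj v z} : Finset V) := by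
    ext z
    simp [mem_closedNeighborFinset, or_comm]
  rw [this, card_insert_of_notMem (by simp), gdeg]

theorem emult_eq_card_filter_closedNeighborFinset (G : SimpleGraph V) (φ : V → W) (y' : W)
    (x : V) :
    emult G φ y' x = #{z ∈ closedNeighborFinset G x | φ z = y'} := by
  rw [emult, closedNeighborFinset, filter_filter]
  simp only [and_comm]

theorem sum_emult_closedNeighborFinset [Fintype W] (G : SimpleGraph V) (H : SimpleGraph W)
    (φ : V → W) (y : W) (x : V) :
    ∑ y' ∈ closedNeighborFinset H y, emult G φ y' x =
      #{z ∈ closedNeighborFinset G x | φ z ∈ closedNeighborFinset H y} := by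
  simp only [emult_eq_card_filter_closedNeighborFinset]
  exact sum_card_fiberwise_eq_card_filter _ _ _

theorem weakHom_iff_forall_mem_closedNeighborFinset [Fintype W] {G : SimpleGraph V}
    {H : SimpleGraph W} {φ : V → W} :
    WeakHom G H φ ↔ ∀ x, ∀ z ∈ closedNeighborFinset G x, φ z ∈ closedNeighborFinset H (φ x) := by
  simp only [WeakHom, mem_closedNeighborFinset]
  refine ⟨fun h x z hz => ?_, fun h x z hxz => ?_⟩
  · rcases hz with hxz | rfl
    · exact (h x z hxz).imp id Eq.symm
    · exact Or.inr rfl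
  · exact (h x z (Or.inl hxz)).imp id Eq.symm

theorem weakHom_iff_sum_emult [Fintype W] {G : SimpleGraph V} {H : SimpleGraph W} {φ : V → W} :
    WeakHom G H φ ↔ ∀ x, ∑ y' ∈ closedNeighborFinset H (φ x), emult G φ y' x = gdeg G x + 1 := by
  simp only [weakHom_iff_forall_mem_closedNeighborFinset, sum_emult_closedNeighborFinset,
    ← card_closedNeighborFinset, card_filter_eq_iff]

theorem combinatorialConformal_iff_emult_mul [Fintype W] {G : SimpleGraph V}
    {H : SimpleGraph W} {φ : V → W} :
    CombinatorialConformal G H φ ↔ ∀ y x, φ x = y → ∀ y', (H.Adj y y' ∨ y' = y) →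
      emult G φ y' x * (gdeg H y + 1) = gdeg G x + 1 := by
  rw [CombinatorialConformal, weakHom_iff_sum_emult]
  simp only [forall_comm (α := W), forall_eq', ← mem_closedNeighborFinset, ← forall_and]
  refine forall_congr' fun x => ?_
  rw [← card_closedNeighborFinset H (φ x),
    forall_mul_card_eq_iff ⟨φ x, mem_closedNeighborFinset.2 (Or.inr rfl)⟩]

end ClosedNeighborhood

theorem combinatorial_conformal_iff_lazy_walk_general
    [Fintype V] [Fintype W] (G : SimpleGraph V) (H : SimpleGraph W)
    (φ : V → W) :
    CombinatorialConformal G H φ ↔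
      (∀ y : W, ∀ x : V, φ x = y → ∀ y' : W, (H.Adj y y' ∨ y' = y) →
        (emult G φ y' x : ℝ) / ((gdeg G x : ℝ) + 1) = 1 / ((gdeg H y : ℝ) + 1)) := by
  simp only [natCast_div_succ_eq_one_div_succ_iff, combinatorialConformal_iff_emult_mul]

/-- **Lazy random walk preservation.** A surjective map `φ` is combinatorial conformal iff
for every `y`, every `x ∈ φ⁻¹(y)` and every `y'` with `y' ∼ y` or `y' = y`, the one-step
transition probability of the lazy random walk on `G` into `φ⁻¹(y')`, namely
`k̃_{y'}(x) / (deg_G(x) + 1)`, equals `1 / (deg_𝒢(y) + 1)`. -/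
theorem combinatorial_conformal_iff_lazy_walk
    [Fintype V] [Fintype W] (G : SimpleGraph V) (H : SimpleGraph W)
    (φ : V → W) (hsurj : Function.Surjective φ) :
    CombinatorialConformal G H φ ↔
      (∀ y : W, ∀ x : V, φ x = y → ∀ y' : W, (H.Adj y y' ∨ y' = y) →
        (emult G φ y' x : ℝ) / ((gdeg G x : ℝ) + 1) = 1 / ((gdeg H y : ℝ) + 1)) :=
  combinatorial_conformal_iff_lazy_walk_general G H φ
end

section
/- Let G=(V,E) and 𝒢=(𝒱,ℰ) be finite simple undirected graphs and let φ: V → 𝒱 be a surjective combinatorial conformal map. Then for every y∈𝒱, every x∈φ⁻¹(y), and every y'∈𝒱 with y'∼y or y'=y, the extended multiplicity satisfies k̃_{y'}(x)·(deg_𝒢(y)+1) = deg_G(x)+1; in particular, deg_𝒢(y)+1 divides deg_G(x)+1 for every x∈φ⁻¹(y). -/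
open Finset Classical

variable {V W : Type*}

namespace SimpleGraph

variable [Fintype V] (G : SimpleGraph V)

noncomputable def closedNbhd (x : V) : Finset V :=
  univ.filter (fun z => G.Adj x z ∨ z = x)

theorem card_closedNbhd (x : V) : (G.closedNbhd x).card = gdeg G x + 1 := by
  have : G.closedNbhd x = insert x (univ.filter (G.Adj x)) := by
    ext z
    simp [closedNbhd, or_comm, eq_comm]
  rw [this, card_insert_of_notMem (by simp), gdeg]

theorem emult_eq_card_filter_closedNbhd (φ : V → W) (y' : W) (x : V) :
    emult G φ y' x = ((G.closedNbhd x).filter (φ · = y')).card := by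
  simp only [emult, closedNbhd, filter_filter, and_comm]

end SimpleGraph

open SimpleGraph

section

variable [Fintype V] [Fintype W] {G : SimpleGraph V} {H : SimpleGraph W} {φ : V → W}

theorem WeakHom.mem_closedNbhd (hφ : WeakHom G H φ) {x z : V}
    (hz : z ∈ G.closedNbhd x) : φ z ∈ H.closedNbhd (φ x) := by
  simp only [closedNbhd, mem_filter, mem_univ, true_and] at hz ⊢
  rcases hz with hadj | rfl
  · exact (hφ x z hadj).imp id Eq.symm
  · exact Or.inr rfl

/-- The closed neighbourhood of `x` is partitioned by the macro-sets it meets. -/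
theorem WeakHom.sum_emult (hφ : WeakHom G H φ) (x : V) :
    ∑ y' ∈ H.closedNbhd (φ x), emult G φ y' x = gdeg G x + 1 := by
  rw [← G.card_closedNbhd, card_eq_sum_card_fiberwise fun _ => hφ.mem_closedNbhd]
  simp only [emult_eq_card_filter_closedNbhd]

theorem CombinatorialConformal.emult_mul (hφ : CombinatorialConformal G H φ)
    {x : V} {y' : W} (hy' : H.Adj (φ x) y' ∨ y' = φ x) :
    emult G φ y' x * (gdeg H (φ x) + 1) = gdeg G x + 1 := by
  have hconst : ∀ y'' ∈ H.closedNbhd (φ x), emult G φ y'' x = emult G φ y' x := fun y'' hy'' =>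
    hφ.2 _ x rfl y'' y' (by simpa [closedNbhd] using hy'') hy'
  rw [← hφ.1.sum_emult x, sum_congr rfl hconst, sum_const, card_closedNbhd, smul_eq_mul,
    mul_comm]

end

theorem combinatorial_conformal_degree_divisibility_general
    [Fintype V] [Fintype W] (G : SimpleGraph V) (H : SimpleGraph W)
    (φ : V → W)
    (hcc : CombinatorialConformal G H φ) :
    ∀ y : W, ∀ x : V, φ x = y →
      (∀ y' : W, (H.Adj y y' ∨ y' = y) →
        emult G φ y' x * (gdeg H y + 1) = gdeg G x + 1) ∧
      (gdeg H y + 1) ∣ (gdeg G x + 1) := by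
  rintro _ x rfl
  exact ⟨fun _ hy' => hcc.emult_mul hy', Dvd.intro_left _ (hcc.emult_mul (Or.inr rfl))⟩

/-- For a surjective combinatorial conformal map `φ` onto its quotient graph, the extended
multiplicity satisfies `k̃_{y'}(x) · (deg_𝒢(y) + 1) = deg_G(x) + 1` for all `y'` with
`y' ∼ y` or `y' = y`; in particular `deg_𝒢(y) + 1` divides `deg_G(x) + 1`. -/
theorem combinatorial_conformal_degree_divisibility
    [Fintype V] [Fintype W] (G : SimpleGraph V) (H : SimpleGraph W)
    (φ : V → W) (hsurj : Function.Surjective φ)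
    (hquot : ∀ y y' : W, H.Adj y y' ↔
      y ≠ y' ∧ ∃ x z : V, φ x = y ∧ φ z = y' ∧ G.Adj x z)
    (hcc : CombinatorialConformal G H φ) :
    ∀ y : W, ∀ x : V, φ x = y →
      (∀ y' : W, (H.Adj y y' ∨ y' = y) →
        emult G φ y' x * (gdeg H y + 1) = gdeg G x + 1) ∧
      (gdeg H y + 1) ∣ (gdeg G x + 1) :=
  combinatorial_conformal_degree_divisibility_general G H φ hcc
end

section
/- Let G=(V,E) and 𝒢=(𝒱,ℰ) be finite simple undirected graphs and let φ: V → 𝒱 be a surjective combinatorial conformal map. Then φ is horizontally conformal; in particular, every surjective combinatorial conformal map is a harmonic morphism. -/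
open Finset Classical

variable {V W : Type*}

/-!
Grouping the neighbours of `x` by their macro-set turns `∑_{z ∼ x} f (φ z)` into
`∑_{y'} k_{y'}(x) f y'`. For a weak homomorphism only `y = φ x` and its neighbours contribute,
and if all `k_{y'}(x)` with `y' ∼ y` equal a common `λ`, the sum is `k_y(x) f y + λ ∑_{y' ∼ y} f y'`.
When `f` is harmonic at `y` this is `(k_y(x) + λ deg y) f y`, and the same computation with
`f = 1` gives `deg x = k_y(x) + λ deg y`, so `f ∘ φ` is harmonic at `x` as soon as `deg x > 0`.
For `y' ≠ φ x` the extended multiplicity is the plain one, so combinatorial conformality gives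
horizontal conformality with `λ = k̃_y(x) ≥ 1` (it counts `x` itself), which forces `deg x > 0`.
-/

section

variable [Fintype V] {G : SimpleGraph V} {H : SimpleGraph W} {φ : V → W}

lemma mult_eq_emult_of_ne {x : V} {y' : W} (hne : y' ≠ φ x) :
    mult G φ y' x = emult G φ y' x := by
  unfold mult emult
  congr 1
  refine filter_congr fun z _ => ⟨fun ⟨hz, hadj⟩ => ⟨hz, Or.inl hadj⟩, ?_⟩
  rintro ⟨hz, hadj | rfl⟩
  · exact ⟨hz, hadj⟩
  · exact absurd hz.symm hne

lemma one_le_emult_self (x : V) : 1 ≤ emult G φ (φ x) x :=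
  card_pos.mpr ⟨x, by simp⟩

lemma gdeg_pos_of_mult_pos {x : V} {y' : W} (h : 0 < mult G φ y' x) : 0 < gdeg G x :=
  card_pos.mpr <| (card_pos.mp h).imp fun z hz => by simp_all

lemma exists_adj_of_gdeg_pos {v : V} (h : 0 < gdeg G v) : ∃ w, G.Adj v w := by
  simpa [gdeg, filter_nonempty_iff] using card_pos.mp h

lemma WeakHom.mult_eq_zero (hφ : WeakHom G H φ) {x : V} {y' : W} (hadj : ¬ H.Adj (φ x) y')
    (hne : y' ≠ φ x) : mult G φ y' x = 0 := by
  refine card_eq_zero.mpr (filter_eq_empty_iff.mpr ?_)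
  rintro z - ⟨rfl, hxz⟩
  exact (hφ x z hxz).elim hadj (fun h => hne h.symm)

lemma sum_adj_comp_eq_sum_mult [Fintype W] (f : W → ℝ) (x : V) :
    ∑ z ∈ univ.filter (fun z => G.Adj x z), f (φ z) = ∑ y' : W, (mult G φ y' x : ℝ) * f y' := by
  rw [← sum_fiberwise _ φ]
  refine sum_congr rfl fun y' _ => ?_
  have hfiber : (univ.filter (fun z => G.Adj x z)).filter (fun z => φ z = y')
      = univ.filter (fun z => φ z = y' ∧ G.Adj x z) := by
    ext z; simp [and_comm]
  rw [hfiber, sum_congr rfl fun z hz => congrArg f (mem_filter.mp hz).2.1, sum_const, mult,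
    nsmul_eq_mul]

lemma WeakHom.sum_adj_comp_eq [Fintype W] (hφ : WeakHom G H φ) {x : V} {c : ℕ}
    (hc : ∀ y', H.Adj (φ x) y' → mult G φ y' x = c) (f : W → ℝ) :
    ∑ z ∈ univ.filter (fun z => G.Adj x z), f (φ z)
      = mult G φ (φ x) x * f (φ x) + c * ∑ y' ∈ univ.filter (fun y' => H.Adj (φ x) y'), f y' := by
  have hnotin : φ x ∉ univ.filter (fun y' => H.Adj (φ x) y') := by simp
  rw [sum_adj_comp_eq_sum_mult, ← sum_subset (subset_univ (insert (φ x) _)), sum_insert hnotin,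
    mul_sum]
  · refine congrArg _ (sum_congr rfl fun y' hy' => ?_)
    rw [hc y' (mem_filter.mp hy').2]
  · intro y' _ hy'
    simp only [mem_insert, mem_filter, mem_univ, true_and, not_or] at hy'
    rw [hφ.mult_eq_zero hy'.2 hy'.1, Nat.cast_zero, zero_mul]

lemma WeakHom.gdeg_eq [Fintype W] (hφ : WeakHom G H φ) {x : V} {c : ℕ}
    (hc : ∀ y', H.Adj (φ x) y' → mult G φ y' x = c) :
    (gdeg G x : ℝ) = mult G φ (φ x) x + c * gdeg H (φ x) := by
  simpa [gdeg] using hφ.sum_adj_comp_eq hc (fun _ => 1)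

lemma HorizontallyConformal.harmonicAt_comp [Fintype W] (hφ : HorizontallyConformal G H φ)
    {x : V} {f : W → ℝ} (hf : HarmonicAt H f (φ x)) (hx : 0 < gdeg G x) :
    HarmonicAt G (f ∘ φ) x := by
  obtain ⟨y₀, hy₀⟩ := exists_adj_of_gdeg_pos hf.1
  have hc : ∀ y', H.Adj (φ x) y' → mult G φ y' x = mult G φ y₀ x :=
    fun y' hy' => hφ.2 _ x rfl y' y₀ hy' hy₀
  have hdegH : (gdeg H (φ x) : ℝ) ≠ 0 := Nat.cast_ne_zero.mpr hf.1.ne'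
  have hsumH : ∑ y' ∈ univ.filter (fun y' => H.Adj (φ x) y'), f y' = gdeg H (φ x) * f (φ x) := by
    rw [hf.2, mul_div_cancel₀ _ hdegH]
  refine ⟨hx, ?_⟩
  simp only [Function.comp_apply]
  rw [eq_div_iff (Nat.cast_ne_zero.mpr hx.ne'), hφ.1.sum_adj_comp_eq hc, hsumH, hφ.1.gdeg_eq hc]
  ring

lemma CombinatorialConformal.mult_eq_emult_self (hφ : CombinatorialConformal G H φ) {x : V}
    {y' : W} (hadj : H.Adj (φ x) y') : mult G φ y' x = emult G φ (φ x) x := by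
  rw [mult_eq_emult_of_ne hadj.ne.symm]
  exact hφ.2 _ x rfl y' _ (Or.inl hadj) (Or.inr rfl)

lemma CombinatorialConformal.horizontallyConformal (hφ : CombinatorialConformal G H φ) :
    HorizontallyConformal G H φ := by
  refine ⟨hφ.1, ?_⟩
  rintro _ x rfl y₁ y₂ h₁ h₂
  rw [hφ.mult_eq_emult_self h₁, hφ.mult_eq_emult_self h₂]

end

theorem combinatorial_conformal_is_harmonic_morphism_general
    [Fintype V] [Fintype W] (G : SimpleGraph V) (H : SimpleGraph W)
    (φ : V → W)
    (hcc : CombinatorialConformal G H φ) :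
    HorizontallyConformal G H φ ∧ HarmonicMorphism G H φ := by
  refine ⟨hcc.horizontallyConformal, ?_⟩
  rintro _ x rfl f hf
  obtain ⟨y₀, hy₀⟩ := exists_adj_of_gdeg_pos hf.1
  have hmult : 0 < mult G φ y₀ x := hcc.mult_eq_emult_self hy₀ ▸ one_le_emult_self x
  exact hcc.horizontallyConformal.harmonicAt_comp hf (gdeg_pos_of_mult_pos hmult)

/-- Every surjective combinatorial conformal map is horizontally conformal, and in
particular a harmonic morphism. -/
theorem combinatorial_conformal_is_harmonic_morphism
    [Fintype V] [Fintype W] (G : SimpleGraph V) (H : SimpleGraph W)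
    (φ : V → W) (hsurj : Function.Surjective φ)
    (hcc : CombinatorialConformal G H φ) :
    HorizontallyConformal G H φ ∧ HarmonicMorphism G H φ :=
  combinatorial_conformal_is_harmonic_morphism_general G H φ hcc
end
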